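/- Let r ≥ 2 and n ≥ r be integers. Every nonnegative eigenvector x of Q(T_r(n)) associated with the eigenvalue q(T_r(n)), normalized so that its maximum entry equals 1, satisfies x_v ≥ 1 − 2/n for every vertex v of T_r(n). -/

import Mathlib

open Finset SimpleGraph
open scoped Classical

/-- `F` has a copy in `G`: an injective graph homomorphism. -/
def SimpleGraph.ContainsCopy {α β : Type*} (F : SimpleGraph α) (G : SimpleGraph β) : Prop :=
  ∃ f : F →g G, Function.Injective f

/-- `G` is `F`-free. -/
def SimpleGraph.FFree {α β : Type*} (F : SimpleGraph α) (G : SimpleGraph β) : Prop :=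
  ¬ F.ContainsCopy G

/-- Number of edges of a graph. -/
noncomputable def edgeCount {V : Type*} (G : SimpleGraph V) : ℕ := G.edgeSet.ncard

/-- Degree of a vertex. -/
noncomputable def degCount {V : Type*} (G : SimpleGraph V) (v : V) : ℕ := (G.neighborSet v).ncard

/-- Turán number: max number of edges of an F-free graph on n vertices. -/
noncomputable def exNum {α : Type*} (F : SimpleGraph α) (n : ℕ) : ℕ :=
  sSup {m | ∃ G : SimpleGraph (Fin n), F.FFree G ∧ edgeCount G = m}

/-- Number of edges of the Turán graph `T_r(n)`. -/
noncomputable def turanNum (r n : ℕ) : ℕ := edgeCount (turanGraph n r)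

/-- The hypothesis `ex(n,F) = t_r(n) + O(1)`. -/
def ExIsTuranPlusO1 {α : Type*} (F : SimpleGraph α) (r : ℕ) : Prop :=
  ∃ C : ℤ, ∀ n : ℕ, |(exNum F n : ℤ) - (turanNum r n : ℤ)| ≤ C

/-- `c0 = limsup (ex(n,F) - t_r(n))`. -/
noncomputable def exC0 {α : Type*} (F : SimpleGraph α) (r : ℕ) : ℤ :=
  Filter.limsup (fun n : ℕ => (exNum F n : ℤ) - (turanNum r n : ℤ)) Filter.atTop

/-- The signless Laplacian matrix `Q(G) = D(G) + A(G)` of a graph. -/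
noncomputable def signlessLaplacian {V : Type*} (G : SimpleGraph V) : Matrix V V ℝ :=
  Matrix.of fun u v =>
    (if u = v then (degCount G u : ℝ) else 0) + (if G.Adj u v then 1 else 0)

/-- The signless Laplacian spectral radius `q(G)`: the largest eigenvalue of `Q(G)`. -/
noncomputable def qRad {V : Type*} [Fintype V] [DecidableEq V] (G : SimpleGraph V) : ℝ :=
  sSup (spectrum ℝ (signlessLaplacian G))

/-- Number of edges of `G` with both endpoints in `s`. -/
noncomputable def edgesInside {V : Type*} (G : SimpleGraph V) (s : Set V) : ℕ :=
  {e ∈ G.edgeSet | ∀ v ∈ e, v ∈ s}.ncard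

/-- `e(G_in)` for a partition `P`. -/
noncomputable def edgesIn {V : Type*} (G : SimpleGraph V) {r : ℕ} (P : Fin r → Finset V) : ℕ :=
  ∑ i, edgesInside G (P i)

/-- `e(G_out)`: missing cross pairs for a partition `P`. -/
noncomputable def missingCross {V : Type*} (G : SimpleGraph V) {r : ℕ} (P : Fin r → Finset V) : ℕ :=
  {e : Sym2 V | ¬ e.IsDiag ∧ e ∉ G.edgeSet ∧ ¬ ∃ i, ∀ v ∈ e, v ∈ P i}.ncard

/-- `P` is a partition of the vertex set into `r` parts. -/
def IsVertexPartition {V : Type*} {r : ℕ} (P : Fin r → Finset V) : Prop :=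
  (∀ i j, i ≠ j → Disjoint (P i) (P j)) ∧ ∀ v, ∃ i, v ∈ P i

lemma mod_eq_of_dvd_sub {r a b : ℕ} (hb : b < r) (hba : b ≤ a) (h : r ∣ a - b) : a % r = b := by
  have h2 : b ≡ a [MOD r] := (Nat.modEq_iff_dvd' hba).mpr h
  have h3 := h2.symm
  rwa [Nat.ModEq, Nat.mod_eq_of_lt hb] at h3

lemma mod_self_eq {r i k : ℕ} (hi : i < r) (hk : k % r = i) : r ∣ k - i := by
  have h1 : i ≤ k := by have := Nat.mod_le k r; omega
  have : i ≡ k [MOD r] := by rw [Nat.ModEq, Nat.mod_eq_of_lt hi, hk]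
  exact (Nat.modEq_iff_dvd' h1).mp this

lemma same_mod_close {r a b : ℕ} (hab : b ≤ a) (h : a % r = b % r) (hlt : a - b < r) : a = b := by
  have hd : r ∣ a - b := (Nat.modEq_iff_dvd' hab).mp h.symm
  have := Nat.eq_zero_of_dvd_of_lt hd hlt
  omega

lemma claim_le (r i j n : ℕ) (hj : j ≤ i) (hi : i < r) :
    ((range n).filter (· % r = i)).card ≤ ((range n).filter (· % r = j)).card := by
  apply Finset.card_le_card_of_injOn (fun k => k - (i - j))
  · intro k hk
    simp only [mem_coe, mem_filter, mem_range] at hk ⊢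
    obtain ⟨hkn, hki⟩ := hk
    have hik : i ≤ k := by have := Nat.mod_le k r; omega
    refine ⟨by omega, ?_⟩
    apply mod_eq_of_dvd_sub (by omega) (by omega)
    have h1 := mod_self_eq hi hki
    have h2 : k - (i - j) - j = k - i := by omega
    rw [h2]; exact h1
  · intro a ha b hb hab
    simp only [mem_coe, mem_filter, mem_range] at ha hb
    simp only at hab
    have ha2 : i ≤ a := by have := Nat.mod_le a r; omega
    have hb2 : i ≤ b := by have := Nat.mod_le b r; omega
    omega

lemma claim_lt (r i j n : ℕ) (hij : i < j) (hjr : j < r) :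
    ((range n).filter (· % r = i)).card ≤ ((range n).filter (· % r = j)).card + 1 := by
  have key : ((range n).filter (· % r = i)).card
      ≤ (insert n ((range n).filter (· % r = j))).card := by
    apply Finset.card_le_card_of_injOn (fun k => if k + (j - i) < n then k + (j - i) else n)
    · intro k hk
      simp only [mem_coe, mem_filter, mem_range] at hk ⊢
      obtain ⟨hkn, hki⟩ := hk
      have hik : i ≤ k := by have := Nat.mod_le k r; omega
      by_cases h : k + (j - i) < n
      · rw [if_pos h]
        apply Finset.mem_insert_of_mem
        simp only [mem_filter, mem_range]
        refine ⟨h, ?_⟩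
        apply mod_eq_of_dvd_sub hjr (by omega)
        have h1 := mod_self_eq (lt_trans hij hjr) hki
        have h2 : k + (j - i) - j = k - i := by omega
        rw [h2]; exact h1
      · rw [if_neg h]; exact Finset.mem_insert_self _ _
    · intro a ha b hb hab
      simp only [mem_coe, mem_filter, mem_range] at ha hb
      simp only at hab
      have ha2 : i ≤ a := by have := Nat.mod_le a r; omega
      have hb2 : i ≤ b := by have := Nat.mod_le b r; omega
      by_cases h1 : a + (j - i) < n <;> by_cases h2 : b + (j - i) < n
      · rw [if_pos h1, if_pos h2] at hab; omega
      · rw [if_pos h1, if_neg h2] at hab; omega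
      · rw [if_neg h1, if_pos h2] at hab; omega
      · have hmod : a % r = b % r := by rw [ha.2, hb.2]
        rcases le_total b a with h | h
        · exact same_mod_close h hmod (by omega)
        · exact (same_mod_close h hmod.symm (by omega)).symm
  calc ((range n).filter (· % r = i)).card ≤ _ := key
    _ ≤ _ := Finset.card_insert_le _ _

lemma class_size_bal (r i j n : ℕ) (hi : i < r) (hj : j < r) :
    ((range n).filter (· % r = i)).card ≤ ((range n).filter (· % r = j)).card + 1 := by
  rcases le_or_gt j i with h | h
  · exact (claim_le r i j n h hi).trans (Nat.le_succ _)
  · exact claim_lt r i j n h hj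

lemma card_fin_filter (n : ℕ) (p : ℕ → Prop) [DecidablePred p] :
    (Finset.univ.filter fun v : Fin n => p v.val).card = ((range n).filter p).card := by
  rw [← Finset.card_image_of_injective (Finset.univ.filter fun v : Fin n => p v.val)
    Fin.val_injective]
  congr 1
  ext k
  simp only [Finset.mem_image, mem_filter, Finset.mem_univ, true_and, mem_range]
  constructor
  · rintro ⟨v, hv, rfl⟩; exact ⟨v.isLt, hv⟩
  · rintro ⟨hk, hp⟩; exact ⟨⟨k, hk⟩, hp, rfl⟩

/-- entries of the normalized nonnegative top eigenvector of
`Q(T_r(n))` are at least `1 - 2/n`. -/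
theorem stmt_16 (r n : ℕ) (hr : 2 ≤ r) (hn : r ≤ n) (x : Fin n → ℝ)
    (hx : (signlessLaplacian (turanGraph n r)).mulVec x = qRad (turanGraph n r) • x)
    (hnn : ∀ v, 0 ≤ x v) (hub : ∀ v, x v ≤ 1) (hone : ∃ v, x v = 1) :
    ∀ v, 1 - 2 / (n : ℝ) ≤ x v := by
  classical
  obtain ⟨w, hw⟩ := hone
  set q := qRad (turanGraph n r) with hqdef
  have hr0 : 0 < r := by omega
  set C : ℕ → Finset (Fin n) := fun i => Finset.univ.filter (fun u : Fin n => (u : ℕ) % r = i)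
    with hC
  set s : ℕ → ℕ := fun i => (C i).card with hs
  set T : ℝ := ∑ u, x u with hT
  have hsle : ∀ i, s i ≤ n := by
    intro i
    calc s i ≤ (Finset.univ : Finset (Fin n)).card := Finset.card_le_card (by simp [hC, hs])
      _ = n := by simp
  have hdeg : ∀ u : Fin n, (degCount (turanGraph n r) u : ℝ) = (n : ℝ) - s ((u : ℕ) % r) := by
    intro u
    have h1 : degCount (turanGraph n r) u
        = (Finset.univ.filter fun t : Fin n => (turanGraph n r).Adj u t).card := by
      rw [degCount, Set.ncard_eq_toFinset_card']
      congr 1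
      ext t
      simp [SimpleGraph.neighborSet]
      exact Set.mem_toFinset
    have h2 : (Finset.univ.filter fun t : Fin n => ¬ (turanGraph n r).Adj u t)
        = C ((u : ℕ) % r) := by
      ext t
      simp only [hC, Finset.mem_filter, Finset.mem_univ, true_and]
      show ¬ ((u : ℕ) % r ≠ (t : ℕ) % r) ↔ (t : ℕ) % r = (u : ℕ) % r
      rw [not_ne_iff, eq_comm]
    have h3 := Finset.card_filter_add_card_filter_not
      (s := (Finset.univ : Finset (Fin n))) (p := fun t : Fin n => (turanGraph n r).Adj u t)
    rw [h2, Finset.card_univ, Fintype.card_fin] at h3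
    rw [h1]
    have hcs : (C ((u : ℕ) % r)).card = s ((u : ℕ) % r) := rfl
    have h4 : (Finset.univ.filter fun t : Fin n => (turanGraph n r).Adj u t).card
        = n - s ((u : ℕ) % r) := by omega
    rw [h4]
    push_cast [hsle]
    ring
  have hEq : ∀ u : Fin n, (q - ((n : ℝ) - s ((u : ℕ) % r))) * x u
      = ∑ t ∈ Finset.univ.filter (fun t : Fin n => ¬ ((t : ℕ) % r = (u : ℕ) % r)), x t := by
    intro u
    have h0 := congrFun hx u
    have h1 : (signlessLaplacian (turanGraph n r)).mulVec x u
        = (degCount (turanGraph n r) u : ℝ) * x u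
          + ∑ t ∈ Finset.univ.filter (fun t : Fin n => (turanGraph n r).Adj u t), x t := by
      rw [Matrix.mulVec, dotProduct]
      simp only [signlessLaplacian, Matrix.of_apply, add_mul, ite_mul, one_mul, zero_mul]
      rw [Finset.sum_add_distrib, Finset.sum_ite_eq Finset.univ u (fun t => (degCount (turanGraph n r) u : ℝ) * x t) ]
      simp [Finset.sum_filter]
    have h2 : (Finset.univ.filter fun t : Fin n => (turanGraph n r).Adj u t)
        = Finset.univ.filter (fun t : Fin n => ¬ ((t : ℕ) % r = (u : ℕ) % r)) := by
      ext t
      simp only [Finset.mem_filter, Finset.mem_univ, true_and]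
      show (u : ℕ) % r ≠ (t : ℕ) % r ↔ _
      rw [ne_comm]
    rw [h1, h2, hdeg u, Pi.smul_apply, smul_eq_mul] at h0
    linarith
  have hsplit : ∀ i : ℕ, (∑ t ∈ C i, x t)
      + (∑ t ∈ Finset.univ.filter (fun t : Fin n => ¬ ((t : ℕ) % r = i)), x t) = T := by
    intro i
    rw [hT, hC]
    exact Finset.sum_filter_add_sum_filter_not _ _ _
  have hT1 : (1 : ℝ) ≤ T := by
    rw [hT, ← hw]
    exact Finset.single_le_sum (fun t _ => hnn t) (Finset.mem_univ w)
  have hqgt : ∀ u : Fin n, (n : ℝ) - s ((u : ℕ) % r) < q := by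
    by_contra hcon
    push_neg at hcon
    obtain ⟨u₀, hu₀⟩ := hcon
    have hsum0 : ∑ t ∈ Finset.univ.filter
        (fun t : Fin n => ¬ ((t : ℕ) % r = (u₀ : ℕ) % r)), x t = 0 := by
      have hle : (q - ((n : ℝ) - s ((u₀ : ℕ) % r))) * x u₀ ≤ 0 :=
        mul_nonpos_of_nonpos_of_nonneg (by linarith) (hnn u₀)
      have hge : (0:ℝ) ≤ ∑ t ∈ Finset.univ.filter
          (fun t : Fin n => ¬ ((t : ℕ) % r = (u₀ : ℕ) % r)), x t :=
        Finset.sum_nonneg (fun t _ => hnn t)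
      rw [← hEq u₀]
      linarith [hEq u₀, hle, hge, (hEq u₀) ▸ hge]
    have hzero : ∀ t : Fin n, ¬ ((t : ℕ) % r = (u₀ : ℕ) % r) → x t = 0 := by
      intro t ht
      exact (Finset.sum_eq_zero_iff_of_nonneg (fun t _ => hnn t)).mp hsum0 t
        (by simp [ht])
    have hwi : (w : ℕ) % r = (u₀ : ℕ) % r := by
      by_contra hc
      have := hzero w hc
      rw [hw] at this
      norm_num at this
    set j := if (u₀ : ℕ) % r = 0 then 1 else 0 with hj
    have hji : j ≠ (u₀ : ℕ) % r ∧ j < r := by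
      rw [hj]; split_ifs with h <;> omega
    set u₁ : Fin n := ⟨j, lt_of_lt_of_le hji.2 hn⟩ with hu₁def
    have hu₁ : (u₁ : ℕ) % r = j := Nat.mod_eq_of_lt hji.2
    have hx₁ : x u₁ = 0 := hzero u₁ (by rw [hu₁]; exact hji.1)
    have h5 := hEq u₁
    rw [hx₁, mul_zero] at h5
    have h6 : x w ≤ ∑ t ∈ Finset.univ.filter
        (fun t : Fin n => ¬ ((t : ℕ) % r = (u₁ : ℕ) % r)), x t := by
      apply Finset.single_le_sum (fun t _ => hnn t)
      simp only [Finset.mem_filter, Finset.mem_univ, true_and]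
      rw [hwi, hu₁]
      exact fun h => hji.1 h.symm
    rw [← h5, hw] at h6
    linarith
  have hsame : ∀ u u' : Fin n, (u : ℕ) % r = (u' : ℕ) % r → x u = x u' := by
    intro u u' h
    have e1 := hEq u
    rw [h] at e1
    have e3 : (q - ((n : ℝ) - s ((u' : ℕ) % r))) * x u
        = (q - ((n : ℝ) - s ((u' : ℕ) % r))) * x u' := e1.trans (hEq u').symm
    have hne : q - ((n : ℝ) - s ((u' : ℕ) % r)) ≠ 0 := ne_of_gt (sub_pos.mpr (hqgt u'))
    exact mul_left_cancel₀ hne e3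
  have hBval : ∀ u : Fin n, ∑ t ∈ C ((u : ℕ) % r), x t = (s ((u : ℕ) % r) : ℝ) * x u := by
    intro u
    have : ∀ t ∈ C ((u : ℕ) % r), x t = x u := by
      intro t ht
      apply hsame
      simp only [hC, Finset.mem_filter] at ht
      exact ht.2
    rw [Finset.sum_congr rfl this, Finset.sum_const, nsmul_eq_mul]
  have hclass : ∀ u : Fin n, (q - (n : ℝ) + 2 * s ((u : ℕ) % r)) * x u = T := by
    intro u
    linear_combination (hEq u) + (hsplit ((u : ℕ) % r)) - (hBval u)
  have hD : ∀ u : Fin n, 0 < q - (n : ℝ) + 2 * s ((u : ℕ) % r) := by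
    intro u
    have h1 := hqgt u
    have h2 : (0 : ℝ) ≤ s ((u : ℕ) % r) := Nat.cast_nonneg _
    linarith
  have hTleD : ∀ u : Fin n, T ≤ q - (n : ℝ) + 2 * s ((u : ℕ) % r) := by
    intro u
    rw [← hclass u]
    nlinarith [hD u, hub u, hnn u]
  have hTw : T = q - (n : ℝ) + 2 * s ((w : ℕ) % r) := by
    have := hclass w
    rw [hw, mul_one] at this
    exact this.symm
  have hsize : ∀ i j : ℕ, i < r → j < r → s i ≤ s j + 1 := by
    intro i j hi hj
    have e1 : s i = ((range n).filter (· % r = i)).card := by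
      rw [hs]; simp only [hC]; exact card_fin_filter n (· % r = i)
    have e2 : s j = ((range n).filter (· % r = j)).card := by
      rw [hs]; simp only [hC]; exact card_fin_filter n (· % r = j)
    rw [e1, e2]
    exact class_size_bal r i j n hi hj
  have hrep : ∀ i : ℕ, i < r → ∃ u : Fin n, (u : ℕ) % r = i := by
    intro i hi
    exact ⟨⟨i, lt_of_lt_of_le hi hn⟩, Nat.mod_eq_of_lt hi⟩
  have hfib : ∑ j ∈ range r, ∑ u ∈ C j, x u = T := by
    rw [hT, hC]
    exact Finset.sum_fiberwise_of_maps_to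
      (fun u _ => Finset.mem_range.mpr (Nat.mod_lt _ hr0)) x
  have hcardfib : ∑ j ∈ range r, (s j : ℝ) = (n : ℝ) := by
    have h1 : ∑ j ∈ range r, ∑ _u ∈ C j, (1 : ℝ) = ∑ _u : Fin n, (1 : ℝ) := by
      rw [hC]
      exact Finset.sum_fiberwise_of_maps_to
        (fun u _ => Finset.mem_range.mpr (Nat.mod_lt _ hr0)) (fun _ => (1 : ℝ))
    simpa [Finset.sum_const, nsmul_eq_mul, hs, Finset.card_univ] using h1
  intro v
  have hivr : (v : ℕ) % r < r := Nat.mod_lt _ hr0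
  have hiwr : (w : ℕ) % r < r := Nat.mod_lt _ hr0
  have hn2 : (2 : ℝ) ≤ (n : ℝ) := by
    have : 2 ≤ n := le_trans hr hn
    exact_mod_cast this
  rcases le_or_gt (s ((v : ℕ) % r)) (s ((w : ℕ) % r)) with hcase | hcase
  · -- x v ≥ 1
    have h1 := hclass v
    have hsc : (s ((v : ℕ) % r) : ℝ) ≤ (s ((w : ℕ) % r) : ℝ) := by exact_mod_cast hcase
    have hx1 : (1 : ℝ) ≤ x v := by
      have h2 : (q - (n : ℝ) + 2 * s ((v : ℕ) % r)) * 1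
          ≤ (q - (n : ℝ) + 2 * s ((v : ℕ) % r)) * x v := by
        rw [h1, mul_one, hTw]
        linarith
      exact le_of_mul_le_mul_left h2 (hD v)
    have : (0 : ℝ) ≤ 2 / (n : ℝ) := by positivity
    linarith
  · -- s_v = s_w + 1 and D_v ≥ n
    have hsv : s ((v : ℕ) % r) = s ((w : ℕ) % r) + 1 :=
      le_antisymm (hsize _ _ hivr hiwr) hcase
    have hmax : ∀ j : ℕ, j < r → s j ≤ s ((v : ℕ) % r) := by
      intro j hj
      rw [hsv]
      exact hsize j _ hj hiwr
    have hkey : ∀ j ∈ range r, (s j : ℝ) * T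
        ≤ (∑ u ∈ C j, x u) * (q - (n : ℝ) + 2 * s ((v : ℕ) % r)) := by
      intro j hj
      obtain ⟨uj, huj⟩ := hrep j (Finset.mem_range.mp hj)
      have hB : ∑ u ∈ C j, x u = (s j : ℝ) * x uj := by
        have := hBval uj
        rw [huj] at this
        exact this
      have hcl : (q - (n : ℝ) + 2 * s j) * x uj = T := by
        have := hclass uj
        rw [huj] at this
        exact this
      have hsj : (s j : ℝ) ≤ (s ((v : ℕ) % r) : ℝ) := by
        exact_mod_cast hmax j (Finset.mem_range.mp hj)
      have hsj0 : (0 : ℝ) ≤ (s j : ℝ) := Nat.cast_nonneg _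
      rw [hB, ← hcl]
      have hx0 := hnn uj
      have hDle : q - (n : ℝ) + 2 * (s j : ℝ) ≤ q - (n : ℝ) + 2 * (s ((v : ℕ) % r) : ℝ) := by
        linarith
      nlinarith [mul_le_mul_of_nonneg_left hDle (mul_nonneg hsj0 hx0)]
    have hsum : (n : ℝ) * T ≤ T * (q - (n : ℝ) + 2 * s ((v : ℕ) % r)) := by
      calc (n : ℝ) * T = (∑ j ∈ range r, (s j : ℝ)) * T := by rw [hcardfib]
        _ = ∑ j ∈ range r, (s j : ℝ) * T := Finset.sum_mul _ _ _
        _ ≤ ∑ j ∈ range r, (∑ u ∈ C j, x u) * (q - (n : ℝ) + 2 * s ((v : ℕ) % r)) :=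
            Finset.sum_le_sum hkey
        _ = (∑ j ∈ range r, ∑ u ∈ C j, x u) * (q - (n : ℝ) + 2 * s ((v : ℕ) % r)) :=
            (Finset.sum_mul _ _ _).symm
        _ = T * (q - (n : ℝ) + 2 * s ((v : ℕ) % r)) := by rw [hfib]
    have hDn : (n : ℝ) ≤ q - (n : ℝ) + 2 * s ((v : ℕ) % r) := by
      nlinarith
    have hTD : T = (q - (n : ℝ) + 2 * s ((v : ℕ) % r)) - 2 := by
      rw [hTw]
      have : (s ((w : ℕ) % r) : ℝ) = (s ((v : ℕ) % r) : ℝ) - 1 := by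
        rw [hsv]; push_cast; ring
      rw [this]; ring
    have hn0 : (0 : ℝ) < (n : ℝ) := by linarith
    have h2n : 2 / (n : ℝ) * (n : ℝ) = 2 := by field_simp
    have hmul : 0 < 2 / (n : ℝ) := by positivity
    have hstep : 2 / (n : ℝ) * (n : ℝ) ≤ 2 / (n : ℝ) * (q - (n : ℝ) + 2 * s ((v : ℕ) % r)) :=
      mul_le_mul_of_nonneg_left hDn (le_of_lt hmul)
    have h1 := hclass v
    have hfinal : (q - (n : ℝ) + 2 * s ((v : ℕ) % r)) * (1 - 2 / (n : ℝ))
        ≤ (q - (n : ℝ) + 2 * s ((v : ℕ) % r)) * x v := by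
      rw [h1, hTD]
      nlinarith [hstep, h2n]
    exact le_of_mul_le_mul_left hfinal (hD v)
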